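/- arXiv:2401.00085 — 4 statements merged into one kernel-verified Lean document; each statement's English description precedes it below -/
import Mathlib

section
/- Let μ ∈ ℝ, Ω > 0 and K > 0. Let ν be the Gaussian measure on ℝ with mean μ and variance Ω, and let Φ denote the cumulative distribution function of the standard Gaussian measure on ℝ. Set d₁ = (log K + μ + Ω)/√Ω and d₂ = (log K + μ)/√Ω. Then ∫ max(1 − K·e^z, 0) dν(z) = Φ(−d₂) − K·e^{μ + Ω/2}·Φ(−d₁). -/
open MeasureTheory ProbabilityTheory
open scoped NNReal ENNReal

lemma gaussianReal_Iic_eq_std (m : ℝ) (v : ℝ≥0) (hv : 0 < v) (b : ℝ) :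
    gaussianReal m v (Set.Iic b) = gaussianReal 0 1 (Set.Iic ((b - m) / Real.sqrt v)) := by
  have hs : (0:ℝ) < Real.sqrt v := Real.sqrt_pos.2 (by exact_mod_cast hv)
  have h1 : (gaussianReal 0 1).map (fun x => Real.sqrt v * x) = gaussianReal 0 v := by
    rw [gaussianReal_map_const_mul]
    congr 1
    · ring
    · ext
      simp [Real.sq_sqrt v.coe_nonneg]
  have h2 : (gaussianReal 0 v).map (· + m) = gaussianReal m v := by
    rw [gaussianReal_map_add_const]; congr 1; ring
  have h3 : (gaussianReal 0 1).map (fun x => Real.sqrt v * x + m) = gaussianReal m v := by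
    rw [← h2, ← h1, Measure.map_map (by fun_prop) (by fun_prop)]
    rfl
  rw [← h3, Measure.map_apply (by fun_prop) measurableSet_Iic]
  congr 1
  ext x
  simp only [Set.mem_preimage, Set.mem_Iic]
  rw [le_div_iff₀ hs]
  constructor <;> intro h <;> nlinarith

lemma exp_mul_gaussianPDFReal (μ z : ℝ) (v : ℝ≥0) (hv : 0 < v) :
    Real.exp z * gaussianPDFReal μ v z
      = Real.exp (μ + v / 2) * gaussianPDFReal (μ + v) v z := by
  have hv' : (0:ℝ) < v := by exact_mod_cast hv
  simp only [gaussianPDFReal]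
  rw [mul_left_comm, mul_left_comm (Real.exp _), ← Real.exp_add, ← Real.exp_add]
  congr 2
  field_simp
  ring

lemma integral_gaussianReal_eq (μ : ℝ) (v : ℝ≥0) (hv : v ≠ 0) (g : ℝ → ℝ) :
    ∫ z, g z ∂(gaussianReal μ v) = ∫ z, gaussianPDFReal μ v z * g z := by
  rw [gaussianReal_of_var_ne_zero μ hv]
  have h : (gaussianPDF μ v) = fun x => ((gaussianPDFReal μ v x).toNNReal : ℝ≥0∞) := rfl
  rw [h, integral_withDensity_eq_integral_smul ((measurable_gaussianPDFReal μ v).real_toNNReal)]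
  congr 1 with z
  simp [NNReal.smul_def, Real.coe_toNNReal _ (gaussianPDFReal_nonneg μ v z)]

/-- Black–Scholes type formula for the expected loss-given-default:
if `Z ~ N(μ, Ω)` with `Ω > 0` and `K > 0`, then
`E[(1 − K·e^Z)⁺] = Φ(−d₂) − K·e^{μ+Ω/2}·Φ(−d₁)` where
`d₁ = (log K + μ + Ω)/√Ω` and `d₂ = (log K + μ)/√Ω`,
and `Φ` is the standard Gaussian cdf. -/
theorem stmt_3 (μ : ℝ) (v : ℝ≥0) (hv : 0 < v) (K : ℝ) (hK : 0 < K) :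
    ∫ z, max (1 - K * Real.exp z) 0 ∂(gaussianReal μ v) =
      ((gaussianReal 0 1) (Set.Iic (-((Real.log K + μ) / Real.sqrt (v : ℝ))))).toReal
        - K * Real.exp (μ + (v : ℝ) / 2) *
          ((gaussianReal 0 1)
            (Set.Iic (-((Real.log K + μ + (v : ℝ)) / Real.sqrt (v : ℝ))))).toReal := by
  have hvne : v ≠ 0 := hv.ne'
  set a : ℝ := -Real.log K with ha
  have hind : (fun z => gaussianPDFReal μ v z * max (1 - K * Real.exp z) 0)
      = Set.indicator (Set.Iic a)
          (fun z => gaussianPDFReal μ v z * (1 - K * Real.exp z)) := by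
    funext z
    by_cases hz : z ≤ a
    · rw [Set.indicator_of_mem (Set.mem_Iic.2 hz)]
      congr 1
      rw [max_eq_left]
      have h1 : Real.exp z ≤ K⁻¹ := by
        rw [← Real.exp_log (inv_pos.2 hK), Real.log_inv]
        exact Real.exp_le_exp.2 hz
      have h2 := mul_le_mul_of_nonneg_left h1 hK.le
      rw [mul_inv_cancel₀ hK.ne'] at h2
      linarith
    · rw [Set.indicator_of_notMem (by simpa using hz), max_eq_right, mul_zero]
      push_neg at hz
      have h1 : K⁻¹ < Real.exp z := by
        rw [← Real.exp_log (inv_pos.2 hK), Real.log_inv]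
        exact Real.exp_lt_exp.2 hz
      have h2 := mul_lt_mul_of_pos_left h1 hK
      rw [mul_inv_cancel₀ hK.ne'] at h2
      linarith
  have tilt : ∀ z, gaussianPDFReal μ v z * (1 - K * Real.exp z)
      = gaussianPDFReal μ v z
        - K * Real.exp (μ + v / 2) * gaussianPDFReal (μ + v) v z := by
    intro z
    have h := exp_mul_gaussianPDFReal μ z v hv
    nlinarith [h]
  have hset : ∀ m : ℝ, ∫ x in Set.Iic a, gaussianPDFReal m v x
      = (gaussianReal m v (Set.Iic a)).toReal := by
    intro m
    rw [gaussianReal_apply_eq_integral m hvne, ENNReal.toReal_ofReal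
      (setIntegral_nonneg measurableSet_Iic fun x _ => gaussianPDFReal_nonneg _ _ _)]
  rw [integral_gaussianReal_eq μ v hvne, hind, integral_indicator measurableSet_Iic]
  simp_rw [tilt]
  rw [integral_sub ((integrable_gaussianPDFReal μ v).integrableOn)
    (((integrable_gaussianPDFReal (μ + v) v).integrableOn).const_mul _),
    integral_const_mul, hset μ, hset (μ + v),
    gaussianReal_Iic_eq_std μ v hv, gaussianReal_Iic_eq_std (μ + v) v hv]
  have e1 : (a - μ) / Real.sqrt v = -((Real.log K + μ) / Real.sqrt (v : ℝ)) := by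
    rw [ha]; ring
  have e2 : (a - (μ + v)) / Real.sqrt v
      = -((Real.log K + μ + (v : ℝ)) / Real.sqrt (v : ℝ)) := by
    rw [ha]; ring
  rw [e1, e2]
end

section
/- Let (Ω, F, P) be a probability space, let x_0 : Ω → ℝ^d, u_1, …, u_n : Ω → ℝ^p, v_1, …, v_n : Ω → ℝ^q be random variables such that the family (x_0, u_1, …, u_n, v_1, …, v_n) is mutually independent, let f_k : ℝ^d × ℝ^p → ℝ^d and h_k : ℝ^d × ℝ^q → ℝ^m be measurable, and define x_k = f_k(x_{k−1}, u_k) and y_k = h_k(x_k, v_k) for k = 1, …, n. Then for every k with 1 ≤ k ≤ n and every bounded measurable ψ : ℝ^m → ℝ, almost surely E[ψ(y_k) | σ(x_k) ⊔ σ(y_1, …, y_{k−1})] = E[ψ(y_k) | σ(x_k)]. -/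
open MeasureTheory ProbabilityTheory Finset

section Aux

lemma aux_integrable_of_bdd {α : Type*} [MeasurableSpace α] (μ : Measure α) [IsFiniteMeasure μ]
    {f : α → ℝ} (hf : AEStronglyMeasurable f μ) {C : ℝ} (h : ∀ x, |f x| ≤ C) :
    Integrable f μ :=
  ⟨hf, HasFiniteIntegral.of_bounded (C := C)
    (Filter.Eventually.of_forall fun x => by simpa [Real.norm_eq_abs] using h x)⟩

lemma aux_comap_pair {Ω β γ : Type*} [MeasurableSpace β] [MeasurableSpace γ]
    (a : Ω → β) (b : Ω → γ) :
    MeasurableSpace.comap (fun ω => (a ω, b ω)) inferInstance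
      = MeasurableSpace.comap a inferInstance ⊔ MeasurableSpace.comap b inferInstance := by
  show MeasurableSpace.comap (fun ω => (a ω, b ω))
    (MeasurableSpace.comap Prod.fst _ ⊔ MeasurableSpace.comap Prod.snd _) = _
  rw [MeasurableSpace.comap_sup, MeasurableSpace.comap_comp, MeasurableSpace.comap_comp]
  rfl

lemma aux_indep_mono {Ω : Type*} {mΩ : MeasurableSpace Ω} {μ : Measure Ω}
    {m₁ m₂ m₁' m₂' : MeasurableSpace Ω}
    (hind : Indep m₁ m₂ μ) (h1 : m₁' ≤ m₁) (h2 : m₂' ≤ m₂) : Indep m₁' m₂' μ := by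
  rw [Indep_iff] at hind ⊢
  exact fun t1 t2 ht1 ht2 => hind t1 t2 (h1 _ ht1) (h2 _ ht2)

lemma aux_comap_comp_le_pair {Ω β γ δ : Type*} [MeasurableSpace β] [MeasurableSpace γ]
    [MeasurableSpace δ] (a : Ω → β) (b : Ω → γ) {F : β × γ → δ} (hF : Measurable F) :
    MeasurableSpace.comap (fun ω => F (a ω, b ω)) inferInstance
      ≤ MeasurableSpace.comap a inferInstance ⊔ MeasurableSpace.comap b inferInstance := by
  calc MeasurableSpace.comap (fun ω => F (a ω, b ω)) inferInstance
      = MeasurableSpace.comap (fun ω => (a ω, b ω)) (MeasurableSpace.comap F inferInstance) := by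
        rw [MeasurableSpace.comap_comp]; rfl
    _ ≤ MeasurableSpace.comap (fun ω => (a ω, b ω)) inferInstance :=
        MeasurableSpace.comap_mono hF.comap_le
    _ = _ := aux_comap_pair a b

/-- Freezing lemma: if `W` and `V` are independent, then for bounded measurable `φ`,
`E[φ(W,V) | σ(W)] = ∫ φ(W, z) dP_V` a.s. -/
lemma aux_freeze {Ω β γ : Type*} [MeasurableSpace Ω] [MeasurableSpace β] [MeasurableSpace γ]
    (P : Measure Ω) [IsProbabilityMeasure P]
    {W : Ω → β} {V : Ω → γ} (hW : Measurable W) (hV : Measurable V)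
    (hWV : Indep (MeasurableSpace.comap W inferInstance)
      (MeasurableSpace.comap V inferInstance) P)
    {φ : β × γ → ℝ} (hφ : Measurable φ) {C : ℝ} (hbdd : ∀ x, |φ x| ≤ C) :
    P[(fun ω => φ (W ω, V ω)) | MeasurableSpace.comap W inferInstance]
      =ᵐ[P] fun ω => ∫ z, φ (W ω, z) ∂(P.map V) := by
  set ν := P.map V with hν
  haveI : IsProbabilityMeasure ν := Measure.isProbabilityMeasure_map hV.aemeasurable
  set μW := P.map W with hμW
  haveI : IsProbabilityMeasure μW := Measure.isProbabilityMeasure_map hW.aemeasurable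
  set g : β → ℝ := fun b => ∫ z, φ (b, z) ∂ν with hg
  have hgmeas : StronglyMeasurable g := hφ.stronglyMeasurable.integral_prod_right'
  have hgbdd : ∀ b, |g b| ≤ C := by
    intro b
    calc |g b| ≤ ∫ z, |φ (b, z)| ∂ν := by
          simpa [Real.norm_eq_abs] using
            norm_integral_le_integral_norm (fun z => φ (b, z)) (μ := ν)
      _ ≤ ∫ _z, C ∂ν := by
          refine integral_mono (aux_integrable_of_bdd ν
            ((hφ.comp (measurable_prodMk_left)).abs.aestronglyMeasurable)
            (fun z => by simpa using hbdd (b, z))) (integrable_const C) fun z => hbdd (b, z)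
      _ = C := by simp
  have hm : MeasurableSpace.comap W inferInstance ≤ ‹MeasurableSpace Ω› := hW.comap_le
  have hWc : Measurable[MeasurableSpace.comap W inferInstance] W :=
    measurable_iff_comap_le.mpr le_rfl
  have hfint : Integrable (fun ω => φ (W ω, V ω)) P :=
    aux_integrable_of_bdd P ((hφ.comp (hW.prodMk hV)).aestronglyMeasurable)
      (fun ω => hbdd _)
  have hmap : P.map (fun ω => (W ω, V ω)) = μW.prod ν := by
    have : IndepFun W V P := hWV
    exact (indepFun_iff_map_prod_eq_prod_map_map hW.aemeasurable hV.aemeasurable).mp this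
  have key : (fun ω => g (W ω)) =ᵐ[P] P[(fun ω => φ (W ω, V ω)) | MeasurableSpace.comap W inferInstance] := by
    refine ae_eq_condExp_of_forall_setIntegral_eq hm hfint
      (fun s _ _ => (aux_integrable_of_bdd P
        ((hgmeas.comp_measurable hW).aestronglyMeasurable) (fun ω => hgbdd _)).integrableOn)
      (fun s hs _ => ?_)
      (StronglyMeasurable.aestronglyMeasurable (hgmeas.comp_measurable hWc))
    obtain ⟨t, ht, rfl⟩ := hs
    have hLHS : ∫ ω in W ⁻¹' t, g (W ω) ∂P = ∫ b in t, g b ∂μW :=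
    (setIntegral_map ht hgmeas.aestronglyMeasurable hW.aemeasurable).symm
    have hpre : (fun ω => (W ω, V ω)) ⁻¹' (t ×ˢ (Set.univ : Set γ)) = W ⁻¹' t := by
      ext ω; simp
    have hRHS : ∫ ω in W ⁻¹' t, φ (W ω, V ω) ∂P = ∫ b in t, g b ∂μW := by
      rw [← hpre, ← setIntegral_map (ht.prod MeasurableSet.univ) hφ.aestronglyMeasurable
        ((hW.prodMk hV)).aemeasurable, hmap, ← Measure.prod_restrict,
        Measure.restrict_univ]
      rw [integral_prod _ (aux_integrable_of_bdd _ hφ.aestronglyMeasurable hbdd)]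
    rw [hLHS, hRHS]
  exact key.symm

end Aux

/-- In the state space model `x_k = f_k(x_{k−1}, u_k)`, `y_k = h_k(x_k, v_k)` with
`(x_0, u_1, …, u_n, v_1, …, v_n)` mutually independent: for `1 ≤ k ≤ n` and
bounded measurable `ψ`, almost surely
`E[ψ(y_k) | σ(x_k) ⊔ σ(y_1, …, y_{k−1})] = E[ψ(y_k) | σ(x_k)]`. -/
theorem stmt_9 {Ω : Type*} [MeasurableSpace Ω] (P : Measure Ω) [IsProbabilityMeasure P]
    (d p q m n : ℕ) (hd : 0 < d) (hp : 0 < p) (hq : 0 < q) (hm : 0 < m)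
    (x0 : Ω → (Fin d → ℝ)) (hx0meas : Measurable x0)
    (u : ℕ → Ω → (Fin p → ℝ)) (humeas : ∀ i, Measurable (u i))
    (v : ℕ → Ω → (Fin q → ℝ)) (hvmeas : ∀ i, Measurable (v i))
    (f : ℕ → (Fin d → ℝ) × (Fin p → ℝ) → (Fin d → ℝ)) (hf : ∀ i, Measurable (f i))
    (h : ℕ → (Fin d → ℝ) × (Fin q → ℝ) → (Fin m → ℝ)) (hh : ∀ i, Measurable (h i))
    (hindep : iIndep
      (fun i : Option (Fin n ⊕ Fin n) =>
        i.elim (MeasurableSpace.comap x0 inferInstance)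
          (fun j => Sum.elim
            (fun a : Fin n => MeasurableSpace.comap (u ((a : ℕ) + 1)) inferInstance)
            (fun b : Fin n => MeasurableSpace.comap (v ((b : ℕ) + 1)) inferInstance) j)) P)
    (x : ℕ → Ω → (Fin d → ℝ)) (hx0 : x 0 = x0)
    (hx : ∀ k, 1 ≤ k → k ≤ n → x k = fun ω => f k (x (k - 1) ω, u k ω))
    (y : ℕ → Ω → (Fin m → ℝ))
    (hy : ∀ k, 1 ≤ k → k ≤ n → y k = fun ω => h k (x k ω, v k ω))
    (k : ℕ) (hk1 : 1 ≤ k) (hkn : k ≤ n)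
    (ψ : (Fin m → ℝ) → ℝ) (hψ : Measurable ψ) (hψbdd : ∃ C, ∀ w, |ψ w| ≤ C) :
    P[fun ω => ψ (y k ω) |
        MeasurableSpace.comap (x k) inferInstance ⊔
          ⨆ i ∈ Finset.Icc 1 (k - 1), MeasurableSpace.comap (y i) inferInstance]
      =ᵐ[P]
    P[fun ω => ψ (y k ω) | MeasurableSpace.comap (x k) inferInstance] := by
  obtain ⟨C, hC⟩ := hψbdd
  -- the family of σ-algebras
  set m' : Option (Fin n ⊕ Fin n) → MeasurableSpace Ω :=
    (fun i : Option (Fin n ⊕ Fin n) =>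
      i.elim (MeasurableSpace.comap x0 inferInstance)
        (fun j => Sum.elim
          (fun a : Fin n => MeasurableSpace.comap (u ((a : ℕ) + 1)) inferInstance)
          (fun b : Fin n => MeasurableSpace.comap (v ((b : ℕ) + 1)) inferInstance) j)) with hm'
  have hkn' : k - 1 < n := by omega
  set star : Option (Fin n ⊕ Fin n) := some (Sum.inr ⟨k - 1, hkn'⟩) with hstar
  have h_le : ∀ i, m' i ≤ ‹MeasurableSpace Ω› := by
    rintro (_ | (a | b))
    · exact hx0meas.comap_le
    · exact (humeas _).comap_le
    · exact (hvmeas _).comap_le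
  -- measurability of x and y
  have hxmeas : ∀ j, j ≤ n → Measurable (x j) := by
    intro j
    induction j with
    | zero => intro _; rw [hx0]; exact hx0meas
    | succ i ih =>
      intro hij
      rw [hx (i + 1) (by omega) hij]
      simp only [Nat.add_sub_cancel]
      exact (hf _).comp ((ih (by omega)).prodMk (humeas _))
  have hymeas : ∀ i, 1 ≤ i → i ≤ n → Measurable (y i) := by
    intro i hi1 hin
    rw [hy i hi1 hin]
    exact (hh _).comp ((hxmeas i hin).prodMk (hvmeas _))
  -- claim A : σ(x j) ≤ ⨆ i ∈ ({star}ᶜ : Set (Option (Fin n ⊕ Fin n))), m' i for j ≤ k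
  have claimA : ∀ j, j ≤ k → MeasurableSpace.comap (x j) inferInstance ≤ ⨆ i ∈ ({star}ᶜ : Set (Option (Fin n ⊕ Fin n))), m' i := by
    intro j
    induction j with
    | zero =>
      intro _
      rw [hx0]
      have hmem : (none : Option (Fin n ⊕ Fin n)) ∈ ({star}ᶜ : Set (Option (Fin n ⊕ Fin n))) := by
        simp [hstar]
      exact le_iSup₂ (f := fun i (_ : i ∈ ({star}ᶜ : Set (Option (Fin n ⊕ Fin n)))) => m' i)
        none hmem
    | succ i ih =>
      intro hik
      rw [hx (i + 1) (by omega) (by omega)]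
      simp only [Nat.add_sub_cancel]
      refine le_trans (aux_comap_comp_le_pair (x i) (u (i + 1)) (hf (i + 1))) (sup_le (ih (by omega)) ?_)
      have hiln : i < n := by omega
      have hmem : (some (Sum.inl ⟨i, hiln⟩) : Option (Fin n ⊕ Fin n))
          ∈ ({star}ᶜ : Set (Option (Fin n ⊕ Fin n))) := by
        simp [hstar]
      exact le_iSup₂ (f := fun i (_ : i ∈ ({star}ᶜ : Set (Option (Fin n ⊕ Fin n)))) => m' i)
        (some (Sum.inl ⟨i, hiln⟩)) hmem
  -- claim B : σ(y i) ≤ ⨆ i ∈ ({star}ᶜ : Set (Option (Fin n ⊕ Fin n))), m' i for 1 ≤ i ≤ k - 1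
  have claimB : ∀ i, 1 ≤ i → i ≤ k - 1 → MeasurableSpace.comap (y i) inferInstance ≤ ⨆ i ∈ ({star}ᶜ : Set (Option (Fin n ⊕ Fin n))), m' i := by
    intro i hi1 hik
    rw [hy i hi1 (by omega)]
    refine le_trans (aux_comap_comp_le_pair (x i) (v i) (hh i)) (sup_le (claimA i (by omega)) ?_)
    have hin : i - 1 < n := by omega
    have hmem : (some (Sum.inr ⟨i - 1, hin⟩) : Option (Fin n ⊕ Fin n))
        ∈ ({star}ᶜ : Set (Option (Fin n ⊕ Fin n))) := by
      simp only [hstar, Set.mem_compl_iff, Set.mem_singleton_iff, Option.some.injEq,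
        Sum.inr.injEq, Fin.mk.injEq]
      omega
    have h2 := le_iSup₂ (f := fun i (_ : i ∈ ({star}ᶜ : Set (Option (Fin n ⊕ Fin n)))) => m' i)
      (some (Sum.inr ⟨i - 1, hin⟩)) hmem
    have h3 : m' (some (Sum.inr ⟨i - 1, hin⟩)) = MeasurableSpace.comap (v i) inferInstance := by
      show MeasurableSpace.comap (v (i - 1 + 1)) inferInstance = _
      rw [Nat.sub_add_cancel hi1]
    rwa [h3] at h2
  -- independence of M and σ(v k)
  have hvkM : Indep (⨆ i ∈ ({star}ᶜ : Set (Option (Fin n ⊕ Fin n))), m' i) (MeasurableSpace.comap (v k) inferInstance) P := by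
    have hdisj : Disjoint ({star}ᶜ : Set (Option (Fin n ⊕ Fin n))) {star} :=
      disjoint_compl_left
    have hInd := indep_iSup_of_disjoint h_le hindep hdisj
    have hsingle : (⨆ i ∈ ({star} : Set (Option (Fin n ⊕ Fin n))), m' i) =
        MeasurableSpace.comap (v k) inferInstance := by
      rw [_root_.iSup_singleton]
      show MeasurableSpace.comap (v (k - 1 + 1)) inferInstance = _
      rw [Nat.sub_add_cancel hk1]
    rwa [hsingle] at hInd
  -- the pair random variable
  set Ys : Ω → (Fin (k - 1) → Fin m → ℝ) := fun ω => fun j : Fin (k - 1) => y ((j : ℕ) + 1) ω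
    with hYs
  set W : Ω → (Fin d → ℝ) × (Fin (k - 1) → Fin m → ℝ) := fun ω => (x k ω, Ys ω) with hW
  have hYsmeas : Measurable Ys :=
    measurable_pi_lambda _ fun j => hymeas ((j : ℕ) + 1) (by omega) (by have := j.2; omega)
  have hWmeas : Measurable W := (hxmeas k hkn).prodMk hYsmeas
  -- the supremum σ-algebra equals comap W
  have hYsup : MeasurableSpace.comap Ys inferInstance =
      ⨆ i ∈ Finset.Icc 1 (k - 1), MeasurableSpace.comap (y i) inferInstance := by
    have h1 : MeasurableSpace.comap Ys inferInstance =
        ⨆ j : Fin (k - 1), MeasurableSpace.comap (y ((j : ℕ) + 1)) inferInstance := by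
      show MeasurableSpace.comap Ys
        (⨆ j : Fin (k - 1), MeasurableSpace.comap (fun g => g j) inferInstance) = _
      rw [MeasurableSpace.comap_iSup]
      simp_rw [MeasurableSpace.comap_comp]
      rfl
    rw [h1]
    apply le_antisymm
    · refine iSup_le fun j => ?_
      have hmem : (j : ℕ) + 1 ∈ Finset.Icc 1 (k - 1) := by
        simp only [Finset.mem_Icc]
        have := j.2; omega
      exact le_iSup₂ (f := fun i (_ : i ∈ Finset.Icc 1 (k - 1)) =>
        MeasurableSpace.comap (y i) inferInstance) ((j : ℕ) + 1) hmem
    · refine iSup₂_le fun i hi => ?_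
      simp only [Finset.mem_Icc] at hi
      have hlt : i - 1 < k - 1 := by omega
      have heq : ((⟨i - 1, hlt⟩ : Fin (k - 1)) : ℕ) + 1 = i := by
        simp only []; omega
      have := le_iSup (fun j : Fin (k - 1) =>
        MeasurableSpace.comap (y ((j : ℕ) + 1)) inferInstance) ⟨i - 1, hlt⟩
      rwa [heq] at this
  have hGeq : (MeasurableSpace.comap (x k) inferInstance ⊔
      ⨆ i ∈ Finset.Icc 1 (k - 1), MeasurableSpace.comap (y i) inferInstance) =
      MeasurableSpace.comap W inferInstance := by
    rw [aux_comap_pair (x k) Ys, hYsup]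
  -- comap W ≤ ⨆ i ∈ ({star}ᶜ : Set (Option (Fin n ⊕ Fin n))), m' i and comap (x k) ≤ ⨆ i ∈ ({star}ᶜ : Set (Option (Fin n ⊕ Fin n))), m' i
  have hWM : MeasurableSpace.comap W inferInstance ≤ ⨆ i ∈ ({star}ᶜ : Set (Option (Fin n ⊕ Fin n))), m' i := by
    rw [← hGeq]
    refine sup_le (claimA k le_rfl) (iSup₂_le fun i hi => ?_)
    simp only [Finset.mem_Icc] at hi
    exact claimB i hi.1 hi.2
  -- independence of W and v k, and of x k and v k
  have hIndepW : Indep (MeasurableSpace.comap W inferInstance)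
      (MeasurableSpace.comap (v k) inferInstance) P :=
    aux_indep_mono hvkM hWM le_rfl
  have hIndepx : Indep (MeasurableSpace.comap (x k) inferInstance)
      (MeasurableSpace.comap (v k) inferInstance) P :=
    aux_indep_mono hvkM (claimA k le_rfl) le_rfl
  -- rewrite ψ ∘ y k
  set ν := P.map (v k) with hν
  set φ1 : (Fin d → ℝ) × (Fin q → ℝ) → ℝ := fun pr => ψ (h k pr) with hφ1
  set φ2 : ((Fin d → ℝ) × (Fin (k - 1) → Fin m → ℝ)) × (Fin q → ℝ) → ℝ :=
    fun pr => ψ (h k (pr.1.1, pr.2)) with hφ2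
  have hfun1 : (fun ω => ψ (y k ω)) = fun ω => φ1 (x k ω, v k ω) := by
    simp only [hy k hk1 hkn, hφ1]
  have hfun2 : (fun ω => ψ (y k ω)) = fun ω => φ2 (W ω, v k ω) := by
    simp only [hy k hk1 hkn, hφ2, hW]
  have hE1 := aux_freeze P (hxmeas k hkn) (hvmeas k) hIndepx
    (φ := φ1) (hψ.comp (hh k)) (C := C) (fun pr => hC _)
  have hE2 := aux_freeze P hWmeas (hvmeas k) hIndepW
    (φ := φ2) (hψ.comp ((hh k).comp ((measurable_fst.comp measurable_fst).prodMk
      measurable_snd))) (C := C) (fun pr => hC _)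
  have hsame : (fun ω => ∫ z, φ2 (W ω, z) ∂(P.map (v k)))
      = fun ω => ∫ z, φ1 (x k ω, z) ∂(P.map (v k)) := rfl
  rw [hGeq]
  calc P[fun ω => ψ (y k ω) | MeasurableSpace.comap W inferInstance]
      = P[(fun ω => φ2 (W ω, v k ω)) | MeasurableSpace.comap W inferInstance] := by
        rw [← hfun2]
    _ =ᵐ[P] fun ω => ∫ z, φ1 (x k ω, z) ∂(P.map (v k)) := hsame ▸ hE2
    _ =ᵐ[P] P[(fun ω => φ1 (x k ω, v k ω)) | MeasurableSpace.comap (x k) inferInstance] :=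
        hE1.symm
    _ = P[fun ω => ψ (y k ω) | MeasurableSpace.comap (x k) inferInstance] := by
        rw [← hfun1]
end

section
/- Let (Ω, F, P) be a probability space, let x_0 : Ω → ℝ^d, u_1, …, u_n : Ω → ℝ^p, v_1, …, v_n : Ω → ℝ^q be random variables such that the family (x_0, u_1, …, u_n, v_1, …, v_n) is mutually independent, let f_k : ℝ^d × ℝ^p → ℝ^d and h_k : ℝ^d × ℝ^q → ℝ^m be measurable, and define x_k = f_k(x_{k−1}, u_k) and y_k = h_k(x_k, v_k) for k = 1, …, n. Then for every k with 1 ≤ k ≤ n and every bounded measurable φ : ℝ^d → ℝ, almost surely E[φ(x_k) | σ(x_{k−1}) ⊔ σ(y_1, …, y_{k−1})] = E[φ(x_k) | σ(x_{k−1})]. -/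
open MeasureTheory ProbabilityTheory Finset

/-!
Write `Ψ := φ ∘ f_k`, so that `φ(x_k) = Ψ(x_{k-1}, u_k)`. Every `y_i` with `i < k` and `x_{k-1}`
itself are functions of `x_0`, the `v_i` and the `u_i` with `i < k`, so both conditioning
σ-algebras are independent of `u_k`, and `x_{k-1}` is measurable for both. By the freezing lemma
both conditional expectations are therefore `ω ↦ ∫ Ψ(x_{k-1}(ω), b) d(law of u_k)(b)`.
-/

namespace ProbabilityTheory

variable {Ω α β E : Type*} {m m' mΩ : MeasurableSpace Ω} {mα : MeasurableSpace α}
  {mβ : MeasurableSpace β} [NormedAddCommGroup E] [NormedSpace ℝ E]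
  {P : Measure Ω}

theorem IndepFun.integral_comp_prodMk [IsFiniteMeasure P] {Z : Ω → α} {U : Ω → β}
    (hZU : Z ⟂ᵢ[P] U) (hZ : AEMeasurable Z P) (hU : AEMeasurable U P)
    {F : α × β → E} (hF : StronglyMeasurable F) (hFi : Integrable (fun ω => F (Z ω, U ω)) P) :
    ∫ ω, F (Z ω, U ω) ∂P = ∫ ω, ∫ b, F (Z ω, b) ∂(P.map U) ∂P := by
  have hmap := hZU.map_prod_eq_prod_map_map hZ hU
  have hFi' : Integrable F ((P.map Z).prod (P.map U)) := by
    rwa [← hmap, integrable_map_measure hF.aestronglyMeasurable (hZ.prodMk hU)]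
  rw [← integral_map (hZ.prodMk hU) hF.aestronglyMeasurable, hmap, integral_prod F hFi',
    integral_map hZ hF.integral_prod_right'.aestronglyMeasurable]

/-- The freezing lemma. -/
theorem condExp_comp_prodMk_ae_eq_integral_of_indep [CompleteSpace E] [IsProbabilityMeasure P]
    (hm : m ≤ mΩ) {X : Ω → α} (hX : Measurable[m] X)
    {U : Ω → β} (hU : Measurable U) (hindep : Indep m (mβ.comap U) P)
    {Ψ : α × β → E} (hΨ : StronglyMeasurable Ψ) {C : ℝ} (hC : ∀ z, ‖Ψ z‖ ≤ C) :
    P[fun ω => Ψ (X ω, U ω) | m] =ᵐ[P] fun ω => ∫ b, Ψ (X ω, b) ∂(P.map U) := by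
  have : IsProbabilityMeasure (P.map U) := Measure.isProbabilityMeasure_map hU.aemeasurable
  have hXm : Measurable X := hX.mono hm le_rfl
  have hgX : StronglyMeasurable[m] fun ω => ∫ b, Ψ (X ω, b) ∂(P.map U) :=
    hΨ.integral_prod_right'.comp_measurable hX
  have hgC : ∀ ω, ‖∫ b, Ψ (X ω, b) ∂(P.map U)‖ ≤ C := fun ω => by
    simpa using norm_integral_le_of_norm_le_const (μ := P.map U) (ae_of_all _ fun b => hC (X ω, b))
  have hΨX : Integrable (fun ω => Ψ (X ω, U ω)) P :=
    .of_bound (hΨ.comp_measurable (hXm.prodMk hU)).aestronglyMeasurable C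
      (ae_of_all _ fun _ => hC _)
  refine (ae_eq_condExp_of_forall_setIntegral_eq hm hΨX (fun s _ _ => ?_) (fun s hs _ => ?_)
    hgX.aestronglyMeasurable).symm
  · exact (Integrable.of_bound (hgX.mono hm).aestronglyMeasurable C (ae_of_all _ hgC)).integrableOn
  · -- `(X, 1_s)` is `m`-measurable, hence independent of `U`: apply the product formula to
    -- `((a, t), b) ↦ t • Ψ (a, b)`.
    set ind : Ω → ℝ := s.indicator 1
    have hind (ψ : Ω → E) : (fun ω => ind ω • ψ ω) = s.indicator ψ := by
      funext ω
      by_cases hω : ω ∈ s <;> simp [ind, hω]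
    have hZ : Measurable[m] fun ω => (X ω, ind ω) := hX.prodMk (measurable_const.indicator hs)
    have hZU : (fun ω => (X ω, ind ω)) ⟂ᵢ[P] U := indep_of_indep_of_le_left hindep hZ.comap_le
    have key := hZU.integral_comp_prodMk (hZ.mono hm le_rfl).aemeasurable hU.aemeasurable
      (F := fun z => z.1.2 • Ψ (z.1.1, z.2)) (by fun_prop) (by
        rw [hind]; exact hΨX.indicator (hm s hs))
    calc ∫ ω in s, ∫ b, Ψ (X ω, b) ∂(P.map U) ∂P
        = ∫ ω, ind ω • ∫ b, Ψ (X ω, b) ∂(P.map U) ∂P := by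
          rw [← integral_indicator (hm s hs), hind]
      _ = ∫ ω, ind ω • Ψ (X ω, U ω) ∂P := by simpa only [integral_smul] using key.symm
      _ = ∫ ω in s, Ψ (X ω, U ω) ∂P := by rw [← integral_indicator (hm s hs), hind]

theorem condExp_comp_prodMk_ae_eq_of_le [CompleteSpace E] [IsProbabilityMeasure P]
    (hmm' : m ≤ m') (hm' : m' ≤ mΩ) {X : Ω → α} (hX : Measurable[m] X)
    {U : Ω → β} (hU : Measurable U) (hindep : Indep m' (mβ.comap U) P)
    {Ψ : α × β → E} (hΨ : StronglyMeasurable Ψ) {C : ℝ} (hC : ∀ z, ‖Ψ z‖ ≤ C) :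
    P[fun ω => Ψ (X ω, U ω) | m'] =ᵐ[P] P[fun ω => Ψ (X ω, U ω) | m] :=
  (condExp_comp_prodMk_ae_eq_integral_of_indep hm' (hX.mono hmm' le_rfl) hU hindep hΨ hC).trans
    (condExp_comp_prodMk_ae_eq_integral_of_indep (hmm'.trans hm') hX hU
      (indep_of_indep_of_le_left hindep hmm') hΨ hC).symm

theorem iIndep.indep_iSup_compl_singleton {ι : Type*} {M : ι → MeasurableSpace Ω}
    (h_le : ∀ i, M i ≤ mΩ) (h_indep : iIndep M P) (i : ι) :
    Indep (⨆ j ∈ ({i}ᶜ : Set ι), M j) (M i) P := by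
  simpa using indep_iSup_of_disjoint h_le h_indep (disjoint_compl_left (a := {i}))

end ProbabilityTheory

section StateSpaceModel

variable {Ω α β γ δ : Type*} {mΩ : MeasurableSpace Ω} [MeasurableSpace α] [MeasurableSpace β]
  [MeasurableSpace γ] [MeasurableSpace δ] {f : ℕ → α × β → α} {h : ℕ → α × γ → δ}
  {x : ℕ → Ω → α} {u : ℕ → Ω → β} {v : ℕ → Ω → γ} {y : ℕ → Ω → δ} {n : ℕ}

theorem measurable_state (hf : ∀ i, Measurable (f i))
    (hx : ∀ k, 1 ≤ k → k ≤ n → x k = fun ω => f k (x (k - 1) ω, u k ω))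
    (hx0 : Measurable (x 0)) {j : ℕ} (hjn : j ≤ n) (hu : ∀ i, 1 ≤ i → i ≤ j → Measurable (u i)) :
    Measurable (x j) := by
  induction j with
  | zero => exact hx0
  | succ j ih =>
    rw [hx (j + 1) (by omega) hjn]
    exact (hf _).comp ((ih (by omega) fun i hi1 hij => hu i hi1 (by omega)).prodMk
      (hu _ (by omega) le_rfl))

theorem comap_state_sup_iSup_comap_obs_le (hf : ∀ i, Measurable (f i))
    (hh : ∀ i, Measurable (h i))
    (hx : ∀ k, 1 ≤ k → k ≤ n → x k = fun ω => f k (x (k - 1) ω, u k ω))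
    (hy : ∀ k, 1 ≤ k → k ≤ n → y k = fun ω => h k (x k ω, v k ω))
    (hx0 : Measurable (x 0)) {j : ℕ} (hjn : j ≤ n)
    (hu : ∀ i, 1 ≤ i → i ≤ j → Measurable (u i)) (hv : ∀ i, 1 ≤ i → i ≤ j → Measurable (v i)) :
    MeasurableSpace.comap (x j) inferInstance ⊔
      ⨆ i ∈ Finset.Icc 1 j, MeasurableSpace.comap (y i) inferInstance ≤ mΩ := by
  have hxi (i : ℕ) (hij : i ≤ j) : Measurable (x i) :=
    measurable_state hf hx hx0 (by omega) fun l hl1 hli => hu l hl1 (by omega)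
  refine sup_le (hxi j le_rfl).comap_le (iSup₂_le fun i hi => ?_)
  rw [Finset.mem_Icc] at hi
  rw [hy i hi.1 (by omega)]
  exact ((hh i).comp ((hxi i hi.2).prodMk (hv i hi.1 hi.2))).comap_le

theorem indep_comap_state_sup_iSup_comap_obs (hf : ∀ i, Measurable (f i))
    (hh : ∀ i, Measurable (h i))
    (hx : ∀ k, 1 ≤ k → k ≤ n → x k = fun ω => f k (x (k - 1) ω, u k ω))
    (hy : ∀ k, 1 ≤ k → k ≤ n → y k = fun ω => h k (x k ω, v k ω))
    (hx0 : Measurable (x 0)) (hu : ∀ i, Measurable (u i)) (hv : ∀ i, Measurable (v i))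
    {P : Measure Ω} {M : Option (Fin n ⊕ Fin n) → MeasurableSpace Ω} (hindep : iIndep M P)
    (hM0 : M none = MeasurableSpace.comap (x 0) inferInstance)
    (hMu : ∀ a : Fin n, M (some (.inl a)) = MeasurableSpace.comap (u (a + 1)) inferInstance)
    (hMv : ∀ b : Fin n, M (some (.inr b)) = MeasurableSpace.comap (v (b + 1)) inferInstance)
    {j : ℕ} (hjn : j < n) :
    Indep (MeasurableSpace.comap (x j) inferInstance ⊔
        ⨆ i ∈ Finset.Icc 1 j, MeasurableSpace.comap (y i) inferInstance)
      (MeasurableSpace.comap (u (j + 1)) inferInstance) P := by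
  have h_le : ∀ i, M i ≤ mΩ := by
    rintro (_ | a | b)
    exacts [hM0 ▸ hx0.comap_le, hMu a ▸ (hu _).comap_le, hMv b ▸ (hv _).comap_le]
  set i₀ : Option (Fin n ⊕ Fin n) := some (.inl ⟨j, hjn⟩)
  have hMH : ∀ i ≠ i₀, M i ≤ ⨆ l ∈ ({i₀}ᶜ : Set _), M l := fun i hi => le_biSup M hi
  have hindep_i₀ := hindep.indep_iSup_compl_singleton h_le i₀
  rw [hMu] at hindep_i₀
  refine indep_of_indep_of_le_left hindep_i₀
    (comap_state_sup_iSup_comap_obs_le hf hh hx hy ?_ hjn.le ?_ ?_)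
  · exact measurable_iff_comap_le.2 (hM0 ▸ hMH none (by simp [i₀]))
  · rintro (_ | i) hi1 hij
    · omega
    · exact measurable_iff_comap_le.2 (hMu ⟨i, by omega⟩ ▸ hMH _ (by simp [i₀]; omega))
  · rintro (_ | i) hi1 hij
    · omega
    · exact measurable_iff_comap_le.2 (hMv ⟨i, by omega⟩ ▸ hMH _ (by simp [i₀]))

end StateSpaceModel

theorem stmt_10_general {Ω : Type*} [MeasurableSpace Ω] (P : Measure Ω) [IsProbabilityMeasure P]
    (d p q m n : ℕ)
    (x0 : Ω → (Fin d → ℝ)) (hx0meas : Measurable x0)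
    (u : ℕ → Ω → (Fin p → ℝ)) (humeas : ∀ i, Measurable (u i))
    (v : ℕ → Ω → (Fin q → ℝ)) (hvmeas : ∀ i, Measurable (v i))
    (f : ℕ → (Fin d → ℝ) × (Fin p → ℝ) → (Fin d → ℝ)) (hf : ∀ i, Measurable (f i))
    (h : ℕ → (Fin d → ℝ) × (Fin q → ℝ) → (Fin m → ℝ)) (hh : ∀ i, Measurable (h i))
    (hindep : iIndep
      (fun i : Option (Fin n ⊕ Fin n) =>
        i.elim (MeasurableSpace.comap x0 inferInstance)
          (fun j => Sum.elim
            (fun a : Fin n => MeasurableSpace.comap (u ((a : ℕ) + 1)) inferInstance)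
            (fun b : Fin n => MeasurableSpace.comap (v ((b : ℕ) + 1)) inferInstance) j)) P)
    (x : ℕ → Ω → (Fin d → ℝ)) (hx0 : x 0 = x0)
    (hx : ∀ k, 1 ≤ k → k ≤ n → x k = fun ω => f k (x (k - 1) ω, u k ω))
    (y : ℕ → Ω → (Fin m → ℝ))
    (hy : ∀ k, 1 ≤ k → k ≤ n → y k = fun ω => h k (x k ω, v k ω))
    (k : ℕ) (hk1 : 1 ≤ k) (hkn : k ≤ n)
    (φ : (Fin d → ℝ) → ℝ) (hφ : Measurable φ) (hφbdd : ∃ C, ∀ w, |φ w| ≤ C) :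
    P[fun ω => φ (x k ω) |
        MeasurableSpace.comap (x (k - 1)) inferInstance ⊔
          ⨆ i ∈ Finset.Icc 1 (k - 1), MeasurableSpace.comap (y i) inferInstance]
      =ᵐ[P]
    P[fun ω => φ (x k ω) | MeasurableSpace.comap (x (k - 1)) inferInstance] := by
  subst hx0
  obtain ⟨C, hC⟩ := hφbdd
  have hindep_past := indep_comap_state_sup_iSup_comap_obs hf hh hx hy hx0meas humeas hvmeas
    hindep rfl (fun _ => rfl) (fun _ => rfl) (j := k - 1) (by omega)
  rw [Nat.sub_add_cancel hk1] at hindep_past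
  rw [hx k hk1 hkn]
  exact condExp_comp_prodMk_ae_eq_of_le (Ψ := fun z => φ (f k z)) le_sup_left
    (comap_state_sup_iSup_comap_obs_le hf hh hx hy hx0meas (by omega) (fun i _ _ => humeas i)
      fun i _ _ => hvmeas i)
    (comap_measurable _) (humeas k) hindep_past (hφ.comp (hf k)).stronglyMeasurable fun _ => hC _

/-- In the state space model `x_k = f_k(x_{k−1}, u_k)`, `y_k = h_k(x_k, v_k)` with
`(x_0, u_1, …, u_n, v_1, …, v_n)` mutually independent: for `1 ≤ k ≤ n` and
bounded measurable `φ`, almost surely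
`E[φ(x_k) | σ(x_{k−1}) ⊔ σ(y_1, …, y_{k−1})] = E[φ(x_k) | σ(x_{k−1})]`. -/
theorem stmt_10 {Ω : Type*} [MeasurableSpace Ω] (P : Measure Ω) [IsProbabilityMeasure P]
    (d p q m n : ℕ) (hd : 0 < d) (hp : 0 < p) (hq : 0 < q) (hm : 0 < m)
    (x0 : Ω → (Fin d → ℝ)) (hx0meas : Measurable x0)
    (u : ℕ → Ω → (Fin p → ℝ)) (humeas : ∀ i, Measurable (u i))
    (v : ℕ → Ω → (Fin q → ℝ)) (hvmeas : ∀ i, Measurable (v i))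
    (f : ℕ → (Fin d → ℝ) × (Fin p → ℝ) → (Fin d → ℝ)) (hf : ∀ i, Measurable (f i))
    (h : ℕ → (Fin d → ℝ) × (Fin q → ℝ) → (Fin m → ℝ)) (hh : ∀ i, Measurable (h i))
    (hindep : iIndep
      (fun i : Option (Fin n ⊕ Fin n) =>
        i.elim (MeasurableSpace.comap x0 inferInstance)
          (fun j => Sum.elim
            (fun a : Fin n => MeasurableSpace.comap (u ((a : ℕ) + 1)) inferInstance)
            (fun b : Fin n => MeasurableSpace.comap (v ((b : ℕ) + 1)) inferInstance) j)) P)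
    (x : ℕ → Ω → (Fin d → ℝ)) (hx0 : x 0 = x0)
    (hx : ∀ k, 1 ≤ k → k ≤ n → x k = fun ω => f k (x (k - 1) ω, u k ω))
    (y : ℕ → Ω → (Fin m → ℝ))
    (hy : ∀ k, 1 ≤ k → k ≤ n → y k = fun ω => h k (x k ω, v k ω))
    (k : ℕ) (hk1 : 1 ≤ k) (hkn : k ≤ n)
    (φ : (Fin d → ℝ) → ℝ) (hφ : Measurable φ) (hφbdd : ∃ C, ∀ w, |φ w| ≤ C) :
    P[fun ω => φ (x k ω) |
        MeasurableSpace.comap (x (k - 1)) inferInstance ⊔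
          ⨆ i ∈ Finset.Icc 1 (k - 1), MeasurableSpace.comap (y i) inferInstance]
      =ᵐ[P]
    P[fun ω => φ (x k ω) | MeasurableSpace.comap (x (k - 1)) inferInstance] :=
  stmt_10_general P d p q m n x0 hx0meas u humeas v hvmeas f hf h hh hindep x hx0 hx y hy k hk1 hkn
    φ hφ hφbdd
end

section
/- Let (Ω, F, P) be a probability space, let x_0 : Ω → ℝ^d, u_1, …, u_T : Ω → ℝ^p, v_1, …, v_T : Ω → ℝ^q be random variables such that the family (x_0, u_1, …, u_T, v_1, …, v_T) is mutually independent, let f_j : ℝ^d × ℝ^p → ℝ^d and h_j : ℝ^d × ℝ^q → ℝ^m be measurable, and define x_j = f_j(x_{j−1}, u_j) and y_j = h_j(x_j, v_j) for j = 1, …, T. Then for every k with 0 ≤ k < T and every bounded measurable φ : ℝ^d → ℝ, almost surely E[φ(x_k) | σ(x_{k+1}) ⊔ σ(y_1, …, y_T)] = E[φ(x_k) | σ(x_{k+1}) ⊔ σ(y_1, …, y_k)]. -/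
/-!
Let `G` be the σ-algebra of `x₀, u₁, …, u_{k+1}, v₁, …, v_k` and `H` that of the remaining noise
`u_{k+2}, …, u_T, v_{k+1}, …, v_T`, so that `G` and `H` are independent. The recursion makes
`x_k`, `x_{k+1}` and `y₁, …, y_k` measurable for `G`, and `y_{k+1}, …, y_T` measurable for
`σ(x_{k+1}) ⊔ H`. With `m₁ = σ(x_{k+1}) ⊔ σ(y_{1:k})` and `m₂ = σ(x_{k+1}) ⊔ σ(y_{1:T})` this gives
`m₁ ≤ m₂ ≤ m₁ ⊔ H`. Since `φ(x_k)` is `G`-measurable, `m₁ ≤ G` and `H` is independent of `G`,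
`E[φ(x_k) | m₁ ⊔ H] = E[φ(x_k) | m₁]` (check it on the π-system of sets `A ∩ B`), and the tower
property squeezes `E[φ(x_k) | m₂]` between the two.
-/

open MeasureTheory ProbabilityTheory

open Set in
lemma MeasurableSpace.isPiSystem_image2_inter {Ω : Type*} (m₁ m₂ : MeasurableSpace Ω) :
    IsPiSystem (image2 (· ∩ ·) {s | MeasurableSet[m₁] s} {t | MeasurableSet[m₂] t}) := by
  rintro _ ⟨A, hA, B, hB, rfl⟩ _ ⟨A', hA', B', hB', rfl⟩ -
  exact ⟨A ∩ A', hA.inter hA', B ∩ B', hB.inter hB', (inter_inter_inter_comm A B A' B').symm⟩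

open Set in
lemma MeasurableSpace.sup_eq_generateFrom_image2_inter {Ω : Type*} (m₁ m₂ : MeasurableSpace Ω) :
    m₁ ⊔ m₂ =
      generateFrom (image2 (· ∩ ·) {s | MeasurableSet[m₁] s} {t | MeasurableSet[m₂] t}) := by
  refine le_antisymm (sup_le (fun A hA => ?_) (fun B hB => ?_)) (generateFrom_le ?_)
  · exact measurableSet_generateFrom ⟨A, hA, univ, .univ, inter_univ A⟩
  · exact measurableSet_generateFrom ⟨univ, .univ, B, hB, univ_inter B⟩
  · rintro _ ⟨A, hA, B, hB, rfl⟩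
    exact (le_sup_left (b := m₂) A hA).inter (le_sup_right (a := m₁) B hB)

lemma Measurable.comap_comp_prodMk_le {Ω β γ δ : Type*} {mβ : MeasurableSpace β}
    {mγ : MeasurableSpace γ} {mδ : MeasurableSpace δ} {g : β × γ → δ} (hg : Measurable g)
    (a : Ω → β) (b : Ω → γ) :
    mδ.comap (fun ω => g (a ω, b ω)) ≤ mβ.comap a ⊔ mγ.comap b :=
  (hg.comp (((comap_measurable a).mono le_sup_left le_rfl).prodMk
    ((comap_measurable b).mono le_sup_right le_rfl))).comap_le

namespace MeasureTheory

variable {Ω E : Type*} [NormedAddCommGroup E] [NormedSpace ℝ E]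
  {m m₁ m₂ m' m0 : MeasurableSpace Ω} {μ : Measure Ω} {f : Ω → E}

theorem setIntegral_eq_of_isPiSystem {s : Set (Set Ω)} {g : Ω → E} (hm : m ≤ m0)
    (h_eq : m = MeasurableSpace.generateFrom s) (h_pi : IsPiSystem s)
    (hf : Integrable f μ) (hg : Integrable g μ)
    (basic : ∀ t ∈ s, ∫ ω in t, f ω ∂μ = ∫ ω in t, g ω ∂μ)
    (h_univ : ∫ ω, f ω ∂μ = ∫ ω, g ω ∂μ) {t : Set Ω} (ht : MeasurableSet[m] t) :
    ∫ ω in t, f ω ∂μ = ∫ ω in t, g ω ∂μ := by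
  induction t, ht using MeasurableSpace.induction_on_inter h_eq h_pi with
  | empty => simp
  | basic t ht => exact basic t ht
  | compl t ht h_t =>
    rw [setIntegral_compl (hm t ht) hf, setIntegral_compl (hm t ht) hg, h_univ, h_t]
  | iUnion t h_disj ht h_t =>
    rw [integral_iUnion (fun i => hm _ (ht i)) h_disj hf.integrableOn,
      integral_iUnion (fun i => hm _ (ht i)) h_disj hg.integrableOn]
    exact tsum_congr h_t

variable [CompleteSpace E] [IsFiniteMeasure μ]

/-- Condition `A.indicator f` on `m₂`: by independence this is the constant `∫ A.indicator f`. -/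
theorem setIntegral_inter_eq_smul_of_indep (hm' : m' ≤ m0) (h₂ : m₂ ≤ m0)
    (hf : StronglyMeasurable[m'] f) (hfi : Integrable f μ) (hind : Indep m' m₂ μ)
    {A B : Set Ω} (hA : MeasurableSet[m'] A) (hB : MeasurableSet[m₂] B) :
    ∫ ω in A ∩ B, f ω ∂μ = μ.real B • ∫ ω in A, f ω ∂μ := by
  have hfA : Integrable (A.indicator f) μ := hfi.indicator (hm' A hA)
  calc ∫ ω in A ∩ B, f ω ∂μ = ∫ ω in B, A.indicator f ω ∂μ := by
        rw [setIntegral_indicator (hm' A hA), Set.inter_comm]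
    _ = ∫ ω in B, μ[A.indicator f | m₂] ω ∂μ := (setIntegral_condExp h₂ hfA hB).symm
    _ = ∫ _ in B, ∫ ω, A.indicator f ω ∂μ ∂μ :=
        setIntegral_congr_ae (h₂ B hB) ((condExp_indep_eq hm' h₂ (hf.indicator hA) hind).mono
          fun _ h _ => h)
    _ = μ.real B • ∫ ω in A, f ω ∂μ := by rw [setIntegral_const, integral_indicator (hm' A hA)]

theorem condExp_sup_ae_eq_of_indep (hm' : m' ≤ m0) (h₁ : m₁ ≤ m') (h₂ : m₂ ≤ m0)
    (hf : StronglyMeasurable[m'] f) (hind : Indep m' m₂ μ) :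
    μ[f | m₁ ⊔ m₂] =ᵐ[μ] μ[f | m₁] := by
  by_cases hfi : Integrable f μ
  swap
  · simp only [condExp_of_not_integrable hfi]
    rfl
  have hsup : m₁ ⊔ m₂ ≤ m0 := sup_le (h₁.trans hm') h₂
  have hcond : StronglyMeasurable[m'] (μ[f | m₁]) := stronglyMeasurable_condExp.mono h₁
  refine (ae_eq_condExp_of_forall_setIntegral_eq hsup hfi
    (fun _ _ _ => integrable_condExp.integrableOn) (fun s hs _ => ?_)
    (stronglyMeasurable_condExp.mono (le_sup_left : m₁ ≤ m₁ ⊔ m₂)).aestronglyMeasurable).symm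
  refine setIntegral_eq_of_isPiSystem hsup (MeasurableSpace.sup_eq_generateFrom_image2_inter _ _)
    (MeasurableSpace.isPiSystem_image2_inter _ _) integrable_condExp hfi ?_
    (integral_condExp (h₁.trans hm')) hs
  rintro _ ⟨A, hA, B, hB, rfl⟩
  rw [setIntegral_inter_eq_smul_of_indep hm' h₂ hcond integrable_condExp hind (h₁ A hA) hB,
    setIntegral_inter_eq_smul_of_indep hm' h₂ hf hfi hind (h₁ A hA) hB,
    setIntegral_condExp (h₁.trans hm') hfi hA]

theorem condExp_ae_eq_of_indep_of_le_sup (hm' : m' ≤ m0) (h₁ : m₁ ≤ m') (h₂ : m₂ ≤ m0)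
    (hf : StronglyMeasurable[m'] f) (hind : Indep m' m₂ μ) (hm₁ : m₁ ≤ m) (hm : m ≤ m₁ ⊔ m₂) :
    μ[f | m] =ᵐ[μ] μ[f | m₁] := by
  have hsup : m₁ ⊔ m₂ ≤ m0 := sup_le (h₁.trans hm') h₂
  calc μ[f | m] =ᵐ[μ] μ[μ[f | m₁ ⊔ m₂] | m] := (condExp_condExp_of_le hm hsup).symm
    _ =ᵐ[μ] μ[μ[f | m₁] | m] := condExp_congr_ae (condExp_sup_ae_eq_of_indep hm' h₁ h₂ hf hind)
    _ = μ[f | m₁] := condExp_of_stronglyMeasurable (hm.trans hsup)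
        (stronglyMeasurable_condExp.mono hm₁) integrable_condExp

end MeasureTheory

namespace StateSpaceModel

variable {Ω X U V Y : Type*} [MeasurableSpace X] [MeasurableSpace U]
  [MeasurableSpace V] [MeasurableSpace Y] {T k : ℕ} {x0 : Ω → X} {u : ℕ → Ω → U}
  {v : ℕ → Ω → V} {f : ℕ → X × U → X} {g : ℕ → X × V → Y} {x : ℕ → Ω → X} {y : ℕ → Ω → Y}

/-- The σ-algebras of the primitive random variables: `none` is `x₀`, `inl a` is `u (a + 1)` and
`inr b` is `v (b + 1)`. -/
abbrev noiseSigma (x0 : Ω → X) (u : ℕ → Ω → U) (v : ℕ → Ω → V) (T : ℕ) :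
    Option (Fin T ⊕ Fin T) → MeasurableSpace Ω := fun i =>
  i.elim (MeasurableSpace.comap x0 inferInstance)
    (Sum.elim (fun a => MeasurableSpace.comap (u ((a : ℕ) + 1)) inferInstance)
      (fun b => MeasurableSpace.comap (v ((b : ℕ) + 1)) inferInstance))

/-- The indices of `x₀, u₁, …, u_{k+1}, v₁, …, v_k`, which generate `x₀, …, x_{k+1}, y₁, …, y_k`. -/
def pastNoise (T k : ℕ) : Set (Option (Fin T ⊕ Fin T)) :=
  {i | i.elim True (Sum.elim (fun a => (a : ℕ) ≤ k) (fun b => (b : ℕ) < k))}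

theorem noiseSigma_le [mΩ : MeasurableSpace Ω] (hx0 : Measurable x0) (hu : ∀ j, Measurable (u j))
    (hv : ∀ j, Measurable (v j)) (i : Option (Fin T ⊕ Fin T)) : noiseSigma x0 u v T i ≤ mΩ := by
  rcases i with _ | a | b
  · exact hx0.comap_le
  · exact (hu _).comap_le
  · exact (hv _).comap_le

theorem comap_u_le_biSup {S : Set (Option (Fin T ⊕ Fin T))} {j : ℕ} (hj : 1 ≤ j) (hjT : j - 1 < T)
    (hS : some (.inl ⟨j - 1, hjT⟩) ∈ S) :
    MeasurableSpace.comap (u j) inferInstance ≤ ⨆ i ∈ S, noiseSigma x0 u v T i := by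
  refine le_of_eq_of_le ?_ (le_biSup (noiseSigma x0 u v T) hS)
  show _ = MeasurableSpace.comap (u (j - 1 + 1)) _
  rw [Nat.sub_add_cancel hj]

theorem comap_v_le_biSup {S : Set (Option (Fin T ⊕ Fin T))} {j : ℕ} (hj : 1 ≤ j) (hjT : j - 1 < T)
    (hS : some (.inr ⟨j - 1, hjT⟩) ∈ S) :
    MeasurableSpace.comap (v j) inferInstance ≤ ⨆ i ∈ S, noiseSigma x0 u v T i := by
  refine le_of_eq_of_le ?_ (le_biSup (noiseSigma x0 u v T) hS)
  show _ = MeasurableSpace.comap (v (j - 1 + 1)) _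
  rw [Nat.sub_add_cancel hj]

theorem comap_x_le_past (hf : ∀ j, Measurable (f j))
    (hx : ∀ j, 1 ≤ j → j ≤ T → x j = fun ω => f j (x (j - 1) ω, u j ω))
    (hx0 : x 0 = x0) (hkT : k < T) :
    ∀ j ≤ k + 1, MeasurableSpace.comap (x j) inferInstance ≤
      ⨆ i ∈ pastNoise T k, noiseSigma x0 u v T i := by
  intro j
  induction j with
  | zero =>
    intro _
    rw [hx0]
    exact le_biSup (noiseSigma x0 u v T) (s := pastNoise T k) (i := none) trivial
  | succ n ih =>
    intro hn
    rw [hx (n + 1) (by omega) (by omega), Nat.add_sub_cancel]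
    exact ((hf _).comap_comp_prodMk_le _ _).trans (sup_le (ih (by omega))
      (comap_u_le_biSup (by omega) (by omega) (by simp [pastNoise]; omega)))

theorem comap_y_le_past (hf : ∀ j, Measurable (f j))
    (hx : ∀ j, 1 ≤ j → j ≤ T → x j = fun ω => f j (x (j - 1) ω, u j ω))
    (hg : ∀ j, Measurable (g j))
    (hy : ∀ j, 1 ≤ j → j ≤ T → y j = fun ω => g j (x j ω, v j ω))
    (hx0 : x 0 = x0) (hkT : k < T) {j : ℕ} (hj : 1 ≤ j) (hjk : j ≤ k) :
    MeasurableSpace.comap (y j) inferInstance ≤ ⨆ i ∈ pastNoise T k, noiseSigma x0 u v T i := by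
  rw [hy j hj (by omega)]
  exact ((hg j).comap_comp_prodMk_le _ _).trans (sup_le (comap_x_le_past hf hx hx0 hkT j (by omega))
    (comap_v_le_biSup hj (by omega) (by simp [pastNoise]; omega)))

theorem comap_x_le_sup_future (hf : ∀ j, Measurable (f j))
    (hx : ∀ j, 1 ≤ j → j ≤ T → x j = fun ω => f j (x (j - 1) ω, u j ω))
    {j : ℕ} (hkj : k + 1 ≤ j) (hjT : j ≤ T) :
    MeasurableSpace.comap (x j) inferInstance ≤ MeasurableSpace.comap (x (k + 1)) inferInstance ⊔
      ⨆ i ∈ (pastNoise T k)ᶜ, noiseSigma x0 u v T i := by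
  induction j, hkj using Nat.le_induction with
  | base => exact le_sup_left
  | succ n hn ih =>
    rw [hx (n + 1) (by omega) hjT, Nat.add_sub_cancel]
    exact ((hf _).comap_comp_prodMk_le _ _).trans (sup_le (ih (by omega))
      ((comap_u_le_biSup (by omega) (by omega) (by simp [pastNoise]; omega)).trans le_sup_right))

theorem comap_y_le_sup_future (hf : ∀ j, Measurable (f j))
    (hx : ∀ j, 1 ≤ j → j ≤ T → x j = fun ω => f j (x (j - 1) ω, u j ω))
    (hg : ∀ j, Measurable (g j))
    (hy : ∀ j, 1 ≤ j → j ≤ T → y j = fun ω => g j (x j ω, v j ω))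
    {j : ℕ} (hkj : k + 1 ≤ j) (hjT : j ≤ T) :
    MeasurableSpace.comap (y j) inferInstance ≤ MeasurableSpace.comap (x (k + 1)) inferInstance ⊔
      ⨆ i ∈ (pastNoise T k)ᶜ, noiseSigma x0 u v T i := by
  rw [hy j (by omega) hjT]
  exact ((hg j).comap_comp_prodMk_le _ _).trans (sup_le (comap_x_le_sup_future hf hx hkj hjT)
    ((comap_v_le_biSup (by omega) (by omega) (by simp [pastNoise]; omega)).trans le_sup_right))

end StateSpaceModel

open StateSpaceModel in
theorem stmt_11_general {Ω : Type*} [MeasurableSpace Ω] (P : Measure Ω) [IsProbabilityMeasure P]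
    (d p q m T : ℕ)
    (x0 : Ω → (Fin d → ℝ)) (hx0meas : Measurable x0)
    (u : ℕ → Ω → (Fin p → ℝ)) (humeas : ∀ i, Measurable (u i))
    (v : ℕ → Ω → (Fin q → ℝ)) (hvmeas : ∀ i, Measurable (v i))
    (f : ℕ → (Fin d → ℝ) × (Fin p → ℝ) → (Fin d → ℝ)) (hf : ∀ i, Measurable (f i))
    (h : ℕ → (Fin d → ℝ) × (Fin q → ℝ) → (Fin m → ℝ)) (hh : ∀ i, Measurable (h i))
    (hindep : iIndep
      (fun i : Option (Fin T ⊕ Fin T) =>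
        i.elim (MeasurableSpace.comap x0 inferInstance)
          (fun j => Sum.elim
            (fun a : Fin T => MeasurableSpace.comap (u ((a : ℕ) + 1)) inferInstance)
            (fun b : Fin T => MeasurableSpace.comap (v ((b : ℕ) + 1)) inferInstance) j)) P)
    (x : ℕ → Ω → (Fin d → ℝ)) (hx0 : x 0 = x0)
    (hx : ∀ j, 1 ≤ j → j ≤ T → x j = fun ω => f j (x (j - 1) ω, u j ω))
    (y : ℕ → Ω → (Fin m → ℝ))
    (hy : ∀ j, 1 ≤ j → j ≤ T → y j = fun ω => h j (x j ω, v j ω))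
    (k : ℕ) (hkT : k < T)
    (φ : (Fin d → ℝ) → ℝ) (hφ : Measurable φ) :
    P[fun ω => φ (x k ω) |
        MeasurableSpace.comap (x (k + 1)) inferInstance ⊔
          ⨆ i ∈ Finset.Icc 1 T, MeasurableSpace.comap (y i) inferInstance]
      =ᵐ[P]
    P[fun ω => φ (x k ω) |
        MeasurableSpace.comap (x (k + 1)) inferInstance ⊔
          ⨆ i ∈ Finset.Icc 1 k, MeasurableSpace.comap (y i) inferInstance] := by
  have hle := noiseSigma_le hx0meas humeas hvmeas (T := T)
  have hφx : Measurable[⨆ i ∈ pastNoise T k, noiseSigma x0 u v T i] fun ω => φ (x k ω) :=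
    hφ.comp (Measurable.of_comap_le (comap_x_le_past hf hx hx0 hkT k k.le_succ))
  refine condExp_ae_eq_of_indep_of_le_sup (iSup₂_le fun i _ => hle i) ?_
    (iSup₂_le fun i _ => hle i) hφx.stronglyMeasurable (indep_biSup_compl hle hindep _) ?_ ?_
  · refine sup_le (comap_x_le_past hf hx hx0 hkT _ le_rfl) (iSup₂_le fun j hj => ?_)
    obtain ⟨hj1, hjk⟩ := Finset.mem_Icc.mp hj
    exact comap_y_le_past hf hx hh hy hx0 hkT hj1 hjk
  · exact sup_le_sup_left (biSup_mono fun j hj => Finset.Icc_subset_Icc_right hkT.le hj) _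
  · refine sup_le (le_sup_left.trans le_sup_left) (iSup₂_le fun j hj => ?_)
    obtain ⟨hj1, hjT⟩ := Finset.mem_Icc.mp hj
    rcases le_or_gt j k with hjk | hkj
    · exact le_sup_of_le_left <| le_sup_of_le_right <|
        le_iSup₂_of_le j (Finset.mem_Icc.mpr ⟨hj1, hjk⟩) le_rfl
    · exact (comap_y_le_sup_future hf hx hh hy hkj hjT).trans (sup_le_sup_right le_sup_left _)

/-- In the state space model `x_j = f_j(x_{j−1}, u_j)`, `y_j = h_j(x_j, v_j)` with
`(x_0, u_1, …, u_T, v_1, …, v_T)` mutually independent: for `0 ≤ k < T` and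
bounded measurable `φ`, almost surely
`E[φ(x_k) | σ(x_{k+1}) ⊔ σ(y_1, …, y_T)] = E[φ(x_k) | σ(x_{k+1}) ⊔ σ(y_1, …, y_k)]`. -/
theorem stmt_11 {Ω : Type*} [MeasurableSpace Ω] (P : Measure Ω) [IsProbabilityMeasure P]
    (d p q m T : ℕ) (hd : 0 < d) (hp : 0 < p) (hq : 0 < q) (hm : 0 < m)
    (x0 : Ω → (Fin d → ℝ)) (hx0meas : Measurable x0)
    (u : ℕ → Ω → (Fin p → ℝ)) (humeas : ∀ i, Measurable (u i))
    (v : ℕ → Ω → (Fin q → ℝ)) (hvmeas : ∀ i, Measurable (v i))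
    (f : ℕ → (Fin d → ℝ) × (Fin p → ℝ) → (Fin d → ℝ)) (hf : ∀ i, Measurable (f i))
    (h : ℕ → (Fin d → ℝ) × (Fin q → ℝ) → (Fin m → ℝ)) (hh : ∀ i, Measurable (h i))
    (hindep : iIndep
      (fun i : Option (Fin T ⊕ Fin T) =>
        i.elim (MeasurableSpace.comap x0 inferInstance)
          (fun j => Sum.elim
            (fun a : Fin T => MeasurableSpace.comap (u ((a : ℕ) + 1)) inferInstance)
            (fun b : Fin T => MeasurableSpace.comap (v ((b : ℕ) + 1)) inferInstance) j)) P)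
    (x : ℕ → Ω → (Fin d → ℝ)) (hx0 : x 0 = x0)
    (hx : ∀ j, 1 ≤ j → j ≤ T → x j = fun ω => f j (x (j - 1) ω, u j ω))
    (y : ℕ → Ω → (Fin m → ℝ))
    (hy : ∀ j, 1 ≤ j → j ≤ T → y j = fun ω => h j (x j ω, v j ω))
    (k : ℕ) (hkT : k < T)
    (φ : (Fin d → ℝ) → ℝ) (hφ : Measurable φ) (hφbdd : ∃ C, ∀ w, |φ w| ≤ C) :
    P[fun ω => φ (x k ω) |
        MeasurableSpace.comap (x (k + 1)) inferInstance ⊔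
          ⨆ i ∈ Finset.Icc 1 T, MeasurableSpace.comap (y i) inferInstance]
      =ᵐ[P]
    P[fun ω => φ (x k ω) |
        MeasurableSpace.comap (x (k + 1)) inferInstance ⊔
          ⨆ i ∈ Finset.Icc 1 k, MeasurableSpace.comap (y i) inferInstance] :=
  stmt_11_general P d p q m T x0 hx0meas u humeas v hvmeas f hf h hh hindep x hx0 hx y hy k hkT φ hφ
end
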